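/- (Multilinear majorant bound) Suppose φ: ℝ^{κn} → ℂ has an integrable radially decreasing majorant Φ (i.e., |φ(y)| ≤ Φ(y), Φ(y) = Φ_0(|y|) with Φ_0 nonincreasing and Φ ∈ L^1(ℝ^{κn})). Set φ_t(y) = t^{−κn} φ(y/t). Then for all locally integrable f_1,...,f_κ on ℝ^n and every x ∈ ℝ^n, sup_{t>0} |((f_1 ⊗ ⋯ ⊗ f_κ) ∗ φ_t)(x,...,x)| ≤ ‖Φ‖_{L^1(ℝ^{κn})} · M^κ(f_1,...,f_κ)(x), where M^κ is the multilinear Hardy–Littlewood maximal operator and (x,...,x) ∈ (ℝ^n)^κ. -/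

import Mathlib

/-!
After the substitution `y = t z`, the convolution at scale `t` is bounded by
`∫ ∏ᵢ |fᵢ(x - t zᵢ)| Φ(z) dz`. By the layer-cake formula this is an integral over `s > 0` of the
integrals of `∏ᵢ |fᵢ(x - t zᵢ)|` over the superlevel sets `{Φ > s}`. Since `Φ` is radially
nonincreasing and integrable, each of these sets is, up to a null set, a centred ball of finite
radius `r`, and rescaling that ball to the unit ball shows that the integral over it is at most its
volume times `M^κ(f₁, …, f_κ)(x)`. Integrating the volumes back over `s` gives `‖Φ‖₁`.
-/

open MeasureTheory
open scoped ENNReal NNReal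

/-- The `i`-th block in `ℝ^n` of a point of `ℝ^{κn} = (ℝ^n)^κ`. -/
def block {n κ : ℕ} (y : EuclideanSpace ℝ (Fin κ × Fin n)) (i : Fin κ) :
    EuclideanSpace ℝ (Fin n) := WithLp.toLp 2 (fun j => y (i, j))

/-- The multilinear Hardy–Littlewood maximal operator
`M^κ(f₁,...,f_κ)(x) = sup_{t>0} (1/v_{κn}) ∫_{B^{κn}} ∏ᵢ |fᵢ(x - t yᵢ)| dy`. -/
noncomputable def multiHLMax {n κ : ℕ}
    (f : Fin κ → EuclideanSpace ℝ (Fin n) → ℂ) (x : EuclideanSpace ℝ (Fin n)) : ℝ≥0∞ :=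
  ⨆ t > (0 : ℝ),
    (volume (Metric.ball (0 : EuclideanSpace ℝ (Fin κ × Fin n)) 1))⁻¹ *
      ∫⁻ y in Metric.ball (0 : EuclideanSpace ℝ (Fin κ × Fin n)) 1,
        ∏ i, (‖f i (x - t • block y i)‖₊ : ℝ≥0∞)

open Measure Set Metric

theorem lintegral_mul_ofReal_le_of_setLIntegral_superlevel_le {α : Type*} [MeasurableSpace α]
    {μ : Measure α} [SFinite μ] {G : α → ℝ≥0∞} {Φ : α → ℝ} (hG : AEMeasurable G μ)
    (hΦ : AEMeasurable Φ μ) (hΦ0 : 0 ≤ᵐ[μ] Φ) {M : ℝ≥0∞}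
    (hGM : ∀ s > 0, ∫⁻ z in {z | s < Φ z}, G z ∂μ ≤ μ {z | s < Φ z} * M) :
    ∫⁻ z, G z * ENNReal.ofReal (Φ z) ∂μ ≤ (∫⁻ z, ENNReal.ofReal (Φ z) ∂μ) * M := by
  have hac := withDensity_absolutelyContinuous μ G
  have hsuper : Antitone fun s : ℝ => μ {z | s < Φ z} :=
    fun a b hab => measure_mono fun z hz => hab.trans_lt hz
  calc ∫⁻ z, G z * ENNReal.ofReal (Φ z) ∂μ = ∫⁻ z, ENNReal.ofReal (Φ z) ∂μ.withDensity G :=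
        (lintegral_withDensity_eq_lintegral_mul₀ hG hΦ.ennreal_ofReal).symm
    _ = ∫⁻ s in Ioi 0, μ.withDensity G {z | s < Φ z} :=
        lintegral_eq_lintegral_meas_lt _ (hac.ae_le hΦ0) (hΦ.mono_ac hac)
    _ ≤ ∫⁻ s in Ioi 0, μ {z | s < Φ z} * M :=
        setLIntegral_mono' measurableSet_Ioi fun s hs =>
          (withDensity_apply' G _).trans_le (hGM s hs)
    _ = (∫⁻ z, ENNReal.ofReal (Φ z) ∂μ) * M := by
        rw [lintegral_mul_const'' M hsuper.measurable.aemeasurable,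
          lintegral_eq_lintegral_meas_lt μ hΦ0 hΦ]

section AddHaar

variable {E : Type*} [NormedAddCommGroup E] [NormedSpace ℝ E] [MeasurableSpace E]
  [BorelSpace E] [FiniteDimensional ℝ E] (μ : Measure E) [μ.IsAddHaarMeasure]

theorem LinearMap.quasiMeasurePreserving_of_surjective {F : Type*} [NormedAddCommGroup F]
    [NormedSpace ℝ F] [MeasurableSpace F] [BorelSpace F] (ν : Measure F) [ν.IsAddHaarMeasure]
    (L : E →ₗ[ℝ] F) (hL : Function.Surjective L) : QuasiMeasurePreserving L μ ν := by
  obtain ⟨c, -, hc⟩ := L.exists_map_addHaar_eq_smul_addHaar μ ν hL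
  exact ⟨L.continuous_of_finiteDimensional.measurable, hc ▸ smul_absolutelyContinuous⟩

theorem lintegral_comp_smul_of_pos {r : ℝ} (hr : 0 < r) (g : E → ℝ≥0∞) :
    ∫⁻ x, g (r • x) ∂μ = ENNReal.ofReal (r ^ Module.finrank ℝ E)⁻¹ * ∫⁻ x, g x ∂μ := by
  calc ∫⁻ x, g (r • x) ∂μ = ∫⁻ x, g x ∂(μ.map (r • ·)) :=
        (lintegral_map_equiv g (MeasurableEquiv.smul₀ r hr.ne')).symm
    _ = _ := by
      rw [map_addHaar_smul μ hr.ne', lintegral_smul_measure, abs_of_pos (by positivity),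
        smul_eq_mul]

theorem setLIntegral_ball_zero_eq_mul {r : ℝ} (hr : 0 < r) (g : E → ℝ≥0∞) :
    ∫⁻ x in ball 0 r, g x ∂μ =
      ENNReal.ofReal (r ^ Module.finrank ℝ E) * ∫⁻ x in ball 0 1, g (r • x) ∂μ := by
  have hpre : (r • ·) ⁻¹' ball (0 : E) r = ball 0 1 := by
    ext x
    simp [norm_smul, abs_of_pos hr, hr]
  have hrd : (0 : ℝ) < r ^ Module.finrank ℝ E := by positivity
  have hind : ∀ x, ((r • ·) ⁻¹' ball (0 : E) r).indicator (fun x => g (r • x)) x =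
      (ball 0 r).indicator g (r • x) := fun _ => rfl
  rw [← lintegral_indicator measurableSet_ball, ← lintegral_indicator measurableSet_ball, ← hpre,
    lintegral_congr hind, lintegral_comp_smul_of_pos μ hr, ← mul_assoc, ← ENNReal.ofReal_mul hrd.le,
    mul_inv_cancel₀ hrd.ne', ENNReal.ofReal_one, one_mul]

theorem exists_ae_eq_ball_of_norm_le_mem [Nontrivial E] {S : Set E}
    (hS : ∀ z ∈ S, ∀ w, ‖w‖ ≤ ‖z‖ → w ∈ S) (hSμ : μ S ≠ ∞) : ∃ r, S =ᵐ[μ] ball (0 : E) r := by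
  rcases S.eq_empty_or_nonempty with rfl | hne
  · exact ⟨0, by simp⟩
  have hbdd : BddAbove (norm '' S) := by
    by_contra hunb
    have hS_univ : S = univ := eq_univ_of_forall fun w => by
      obtain ⟨_, ⟨z, hz, rfl⟩, hlt⟩ := not_bddAbove_iff.1 hunb ‖w‖
      exact hS z hz w hlt.le
    exact hSμ (hS_univ ▸ measure_univ_of_isAddLeftInvariant μ)
  set R := sSup (norm '' S)
  refine ⟨R, Filter.EventuallyLE.antisymm (ae_le_set.2 ?_) (LE.le.eventuallyLE ?_)⟩
  · refine measure_mono_null (fun z ⟨hz, hzR⟩ => ?_) (addHaar_sphere μ 0 R)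
    rw [mem_ball_zero_iff, not_lt] at hzR
    exact mem_sphere_zero_iff_norm.2 ((le_csSup hbdd ⟨z, hz, rfl⟩).antisymm hzR)
  · intro w hw
    obtain ⟨_, ⟨z, hz, rfl⟩, hlt⟩ :=
      exists_lt_of_lt_csSup (hne.image _) (mem_ball_zero_iff.1 hw)
    exact hS z hz w hlt.le

theorem lintegral_enorm_mul_dilation {r : ℝ} (hr : 0 < r) (F φ : E → ℂ) :
    ∫⁻ y, ‖F y * (r ^ Module.finrank ℝ E : ℝ)⁻¹ * φ (r⁻¹ • y)‖ₑ ∂μ =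
      ∫⁻ z, ‖F (r • z)‖ₑ * ‖φ z‖ₑ ∂μ := by
  have hrd : (0 : ℝ) < r ^ Module.finrank ℝ E := by positivity
  have hscale : ‖(((r ^ Module.finrank ℝ E)⁻¹ : ℝ) : ℂ)‖ₑ =
      ENNReal.ofReal (r ^ Module.finrank ℝ E)⁻¹ := by
    rw [← ofReal_norm, Complex.norm_real, Real.norm_of_nonneg (inv_pos.2 hrd).le]
  have hsplit : ∀ y, ‖F y * (r ^ Module.finrank ℝ E : ℝ)⁻¹ * φ (r⁻¹ • y)‖ₑ =
      ENNReal.ofReal (r ^ Module.finrank ℝ E)⁻¹ * (‖F y‖ₑ * ‖φ (r⁻¹ • y)‖ₑ) := fun y => by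
    rw [enorm_mul, enorm_mul, hscale]
    ring
  rw [lintegral_congr hsplit, lintegral_const_mul' _ _ ENNReal.ofReal_ne_top,
    ← lintegral_comp_smul_of_pos μ hr]
  simp only [inv_smul_smul₀ hr.ne']

theorem lintegral_mul_ofReal_le_of_radially_antitone [Nontrivial E] {G : E → ℝ≥0∞} {Φ : E → ℝ}
    (hG : AEMeasurable G μ) (hΦ : Integrable Φ μ) (hΦ0 : ∀ y, 0 ≤ Φ y)
    (hΦ_anti : ∀ y z, ‖y‖ ≤ ‖z‖ → Φ z ≤ Φ y) {M : ℝ≥0∞}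
    (hball : ∀ r, ∫⁻ z in ball 0 r, G z ∂μ ≤ μ (ball 0 r) * M) :
    ∫⁻ z, G z * ENNReal.ofReal (Φ z) ∂μ ≤ (∫⁻ z, ENNReal.ofReal (Φ z) ∂μ) * M := by
  refine lintegral_mul_ofReal_le_of_setLIntegral_superlevel_le hG hΦ.aemeasurable
    (Filter.Eventually.of_forall hΦ0) fun s hs => ?_
  obtain ⟨r, hr⟩ := exists_ae_eq_ball_of_norm_le_mem μ
    (fun z hz w hw => hz.trans_le (hΦ_anti w z hw)) (hΦ.measure_gt_lt_top hs).ne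
  rw [setLIntegral_congr hr, measure_congr hr]
  exact hball r

end AddHaar

section Block

variable {n κ : ℕ}

theorem block_smul (t : ℝ) (y : EuclideanSpace ℝ (Fin κ × Fin n)) (i : Fin κ) :
    block (t • y) i = t • block y i := rfl

def blockLinearMap (i : Fin κ) :
    EuclideanSpace ℝ (Fin κ × Fin n) →ₗ[ℝ] EuclideanSpace ℝ (Fin n) where
  toFun y := block y i
  map_add' _ _ := rfl
  map_smul' _ _ := rfl

theorem blockLinearMap_surjective (i : Fin κ) :
    Function.Surjective (blockLinearMap (n := n) i) := by
  classical
  intro v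
  refine ⟨WithLp.toLp 2 fun p => if p.1 = i then v p.2 else 0, ?_⟩
  ext j
  simp [blockLinearMap, block]

theorem quasiMeasurePreserving_sub_smul_block (x : EuclideanSpace ℝ (Fin n)) {t : ℝ}
    (ht : t ≠ 0) (i : Fin κ) :
    QuasiMeasurePreserving (fun y : EuclideanSpace ℝ (Fin κ × Fin n) => x - t • block y i) :=
  ((measurePreserving_sub_left volume x).quasiMeasurePreserving.comp
    (quasiMeasurePreserving_smul volume ht)).comp
    (LinearMap.quasiMeasurePreserving_of_surjective volume volume _
      (blockLinearMap_surjective i))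

variable (f : Fin κ → EuclideanSpace ℝ (Fin n) → ℂ) (x : EuclideanSpace ℝ (Fin n))

theorem aemeasurable_prod_enorm_sub_smul_block (hf : ∀ i, LocallyIntegrable (f i) volume)
    {t : ℝ} (ht : t ≠ 0) :
    AEMeasurable (fun z : EuclideanSpace ℝ (Fin κ × Fin n) =>
      ∏ i, (‖f i (x - t • block z i)‖₊ : ℝ≥0∞)) volume :=
  Finset.aemeasurable_fun_prod _ fun i _ =>
    (hf i).aestronglyMeasurable.enorm.comp_quasiMeasurePreserving
      (quasiMeasurePreserving_sub_smul_block x ht i)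

theorem setLIntegral_unitBall_le_multiHLMax {t : ℝ} (ht : 0 < t) :
    ∫⁻ z in ball 0 1, ∏ i, (‖f i (x - t • block z i)‖₊ : ℝ≥0∞) ≤
      volume (ball (0 : EuclideanSpace ℝ (Fin κ × Fin n)) 1) * multiHLMax f x := by
  rw [← ENNReal.inv_mul_le_iff (measure_ball_pos _ _ one_pos).ne' measure_ball_lt_top.ne,
    multiHLMax]
  exact le_iSup₂_of_le t ht le_rfl

theorem setLIntegral_ball_le_multiHLMax {t : ℝ} (ht : 0 < t) (r : ℝ) :
    ∫⁻ z in ball 0 r, ∏ i, (‖f i (x - t • block z i)‖₊ : ℝ≥0∞) ≤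
      volume (ball (0 : EuclideanSpace ℝ (Fin κ × Fin n)) r) * multiHLMax f x := by
  rcases le_or_gt r 0 with hr | hr
  · simp [ball_eq_empty.2 hr]
  rw [setLIntegral_ball_zero_eq_mul volume hr, addHaar_ball_of_pos volume 0 hr, mul_assoc]
  gcongr
  simpa only [block_smul, smul_smul] using setLIntegral_unitBall_le_multiHLMax f x (mul_pos ht hr)

end Block

/-- Multilinear majorant bound: if `φ : ℝ^{κn} → ℂ` has an integrable radially decreasing
majorant `Φ`, and `φ_t(y) = t^{-κn} φ(y/t)`, then
`sup_{t>0} |((f₁ ⊗ ⋯ ⊗ f_κ) ∗ φ_t)(x,…,x)| ≤ ‖Φ‖_{L¹} · M^κ(f₁,...,f_κ)(x)`. -/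
theorem multilinear_majorant_bound {n κ : ℕ} (hn : 1 ≤ n) (hκ : 1 ≤ κ)
    (φ : EuclideanSpace ℝ (Fin κ × Fin n) → ℂ)
    (Φ : EuclideanSpace ℝ (Fin κ × Fin n) → ℝ) (Φ₀ : ℝ → ℝ)
    (hmaj : ∀ y, ‖φ y‖ ≤ Φ y) (hrad : ∀ y, Φ y = Φ₀ ‖y‖)
    (hdecr : ∀ a b : ℝ, 0 ≤ a → a ≤ b → Φ₀ b ≤ Φ₀ a)
    (hΦ : Integrable Φ volume)
    (f : Fin κ → EuclideanSpace ℝ (Fin n) → ℂ)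
    (hf : ∀ i, LocallyIntegrable (f i) volume) (x : EuclideanSpace ℝ (Fin n)) :
    (⨆ t > (0 : ℝ),
        (‖∫ y : EuclideanSpace ℝ (Fin κ × Fin n),
            (∏ i, f i (x - block y i)) * (t ^ (κ * n) : ℝ)⁻¹ * φ (t⁻¹ • y)‖₊ : ℝ≥0∞)) ≤
      (∫⁻ y, (‖Φ y‖₊ : ℝ≥0∞)) * multiHLMax f x := by
  have hd : Module.finrank ℝ (EuclideanSpace ℝ (Fin κ × Fin n)) = κ * n := by simp
  have : Nontrivial (EuclideanSpace ℝ (Fin κ × Fin n)) :=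
    Module.nontrivial_of_finrank_pos (R := ℝ) (hd ▸ Nat.mul_pos hκ hn)
  have hΦ0 : ∀ y, 0 ≤ Φ y := fun y => (norm_nonneg _).trans (hmaj y)
  have hΦ_anti : ∀ y z, ‖y‖ ≤ ‖z‖ → Φ z ≤ Φ y := fun y z hyz => by
    rw [hrad, hrad]
    exact hdecr _ _ (norm_nonneg y) hyz
  refine iSup₂_le fun t ht => ?_
  calc _ ≤ ∫⁻ y, ‖(∏ i, f i (x - block y i)) * (t ^ (κ * n) : ℝ)⁻¹ * φ (t⁻¹ • y)‖ₑ :=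
        enorm_integral_le_lintegral_enorm _
    _ = ∫⁻ z, ‖∏ i, f i (x - block (t • z) i)‖ₑ * ‖φ z‖ₑ := by
        rw [← hd]
        exact lintegral_enorm_mul_dilation volume ht _ φ
    _ ≤ ∫⁻ z, (∏ i, (‖f i (x - t • block z i)‖₊ : ℝ≥0∞)) * ENNReal.ofReal (Φ z) := by
        refine lintegral_mono fun z => mul_le_mul' ?_ ?_
        · simp [block_smul, enorm_eq_nnnorm, nnnorm_prod]
        · rw [← ofReal_norm]
          exact ENNReal.ofReal_le_ofReal (hmaj z)
    _ ≤ (∫⁻ z, ENNReal.ofReal (Φ z)) * multiHLMax f x :=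
        lintegral_mul_ofReal_le_of_radially_antitone volume
          (aemeasurable_prod_enorm_sub_smul_block f x hf ht.ne') hΦ hΦ0 hΦ_anti
          (setLIntegral_ball_le_multiHLMax f x ht)
    _ = _ := by simp_rw [← enorm_eq_nnnorm, Real.enorm_eq_ofReal (hΦ0 _)]
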